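/- If I ⊂ K[x_0,...,x_n] is a strongly stable ideal with Hilbert polynomial p(t), then the ideal I' = (x_0, I) ∩ K[x_1,...,x_n] is a strongly stable ideal of K[x_1,...,x_n] whose quotient has Hilbert polynomial Δp(t) = p(t) − p(t−1). -/

import Mathlib

open MvPolynomial

/-- The increasing elementary move `e_i^+` on exponent vectors:
it sends `x^α` (with `α_i > 0`) to `x_{i+1} · x^α / x_i`. -/
noncomputable def upMove {n : ℕ} (i : Fin n) (α : Fin (n + 1) →₀ ℕ) : Fin (n + 1) →₀ ℕ :=
  α - Finsupp.single i.castSucc 1 + Finsupp.single i.succ 1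

/-- A monomial ideal: every monomial appearing in an element of `I` lies in `I`. -/
def IsMonomialIdeal {n : ℕ} {K : Type*} [Field K]
    (I : Ideal (MvPolynomial (Fin (n + 1)) K)) : Prop :=
  ∀ f ∈ I, ∀ d ∈ f.support, (monomial d (1 : K)) ∈ I

/-- A strongly stable ideal: a monomial ideal closed under admissible increasing
elementary moves. -/
def IsStronglyStable {n : ℕ} {K : Type*} [Field K]
    (I : Ideal (MvPolynomial (Fin (n + 1)) K)) : Prop :=
  IsMonomialIdeal I ∧
    ∀ α : Fin (n + 1) →₀ ℕ, monomial α (1 : K) ∈ I →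
      ∀ i : Fin n, 0 < α i.castSucc → monomial (upMove i α) (1 : K) ∈ I

/-- The Hilbert function of `K[x_0,…,x_n]/I` in degree `t`:
the `K`-dimension of the degree-`t` graded piece of the quotient. -/
noncomputable def hilbFun {n : ℕ} {K : Type*} [Field K]
    (I : Ideal (MvPolynomial (Fin (n + 1)) K)) (t : ℕ) : ℕ :=
  Module.finrank K
    (↥(homogeneousSubmodule (Fin (n + 1)) K t) ⧸
      (Submodule.comap (homogeneousSubmodule (Fin (n + 1)) K t).subtype
        (I.restrictScalars K)))

/-! For a monomial ideal `I`, `hilbFun I t` counts the standard monomials `x^β ∉ I` of degree `t`.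
Those with `β 0 = 0` are, after dropping `x_0`, the standard monomials of degree `t` of the hyperplane
section `I'`. For strongly stable `I`, multiplication by `x_0` maps the standard monomials of degree
`t - 1` onto the remaining ones as soon as `t - 1` is at least the degree of every minimal monomial of
`I` (finitely many, by Dickson's lemma). Hence `hilbFun I' t = hilbFun I t - hilbFun I (t - 1)` for
large `t`. -/

theorem Finsupp.exists_degree_bound_le_mem {σ : Type*} [Finite σ] (M : Set (σ →₀ ℕ)) :
    ∃ D, ∀ β ∈ M, ∃ g ∈ M, g ≤ β ∧ g.degree ≤ D := by
  obtain ⟨D, hD⟩ := ((WellQuasiOrderedLE.finite_of_isAntichain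
    (setOfPred_minimal_antichain (· ∈ M))).image Finsupp.degree).bddAbove
  refine ⟨D, fun β hβ => ?_⟩
  obtain ⟨g, hgβ, hg⟩ := exists_minimal_le_of_wellFoundedLT (· ∈ M) β hβ
  exact ⟨g, hg.prop, hgβ, hD ⟨g, hg, rfl⟩⟩

theorem MvPolynomial.monomial_one_mem_of_le {σ R : Type*} [CommSemiring R]
    {I : Ideal (MvPolynomial σ R)} {a b : σ →₀ ℕ} (ha : monomial a (1 : R) ∈ I) (h : a ≤ b) :
    monomial b (1 : R) ∈ I := by
  simpa [monomial_mul, tsub_add_cancel_of_le h] using I.mul_mem_left (monomial (b - a) 1) ha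

namespace IsMonomialIdeal

variable {m : ℕ} {K : Type*} [Field K] {I : Ideal (MvPolynomial (Fin (m + 1)) K)}

theorem mem_iff (hI : IsMonomialIdeal I) {f : MvPolynomial (Fin (m + 1)) K} :
    f ∈ I ↔ ∀ d ∈ f.support, monomial d (1 : K) ∈ I := by
  refine ⟨hI f, fun h => ?_⟩
  rw [f.as_sum]
  refine I.sum_mem fun d hd => ?_
  simpa [C_mul_monomial] using I.mul_mem_left (C (coeff d f)) (h d hd)

theorem span_X_sup (hI : IsMonomialIdeal I) (i : Fin (m + 1)) :
    IsMonomialIdeal (Ideal.span {X i} ⊔ I) := by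
  intro f hf d hd
  obtain ⟨_, hy, z, hz, rfl⟩ := Submodule.mem_sup.mp hf
  obtain ⟨a, rfl⟩ := Ideal.mem_span_singleton'.mp hy
  rcases Finset.mem_union.mp (support_add hd) with hd | hd
  · rw [support_mul_X] at hd
    obtain ⟨d, -, rfl⟩ := Finset.mem_map.mp hd
    rw [addRightEmbedding_apply, ← mul_one (1 : K), ← monomial_mul]
    exact Ideal.mem_sup_left (Ideal.mul_mem_left _ _ (Ideal.mem_span_singleton_self _))
  · exact Ideal.mem_sup_right (hI z hz d hd)

theorem monomial_mem_of_mem_span_X_sup (hI : IsMonomialIdeal I) {i : Fin (m + 1)}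
    {β : Fin (m + 1) →₀ ℕ} (hβ : β i = 0) (h : monomial β (1 : K) ∈ Ideal.span {X i} ⊔ I) :
    monomial β (1 : K) ∈ I := by
  obtain ⟨_, hy, z, hz, hyz⟩ := Submodule.mem_sup.mp h
  obtain ⟨a, rfl⟩ := Ideal.mem_span_singleton'.mp hy
  have hβf : β ∈ (a * X i + z).support := by simp [hyz]
  rcases Finset.mem_union.mp (support_add hβf) with hβa | hβz
  · rw [support_mul_X] at hβa
    obtain ⟨d, -, rfl⟩ := Finset.mem_map.mp hβa
    simp at hβ
  · exact hI z hz β hβz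

end IsMonomialIdeal

def standardMonomials {m : ℕ} {K : Type*} [Field K] (I : Ideal (MvPolynomial (Fin (m + 1)) K))
    (t : ℕ) : Set (Fin (m + 1) →₀ ℕ) :=
  {β | β.degree = t ∧ monomial β (1 : K) ∉ I}

section standardMonomials

variable {m : ℕ} {K : Type*} [Field K] {I : Ideal (MvPolynomial (Fin (m + 1)) K)}

theorem standardMonomials_finite (I : Ideal (MvPolynomial (Fin (m + 1)) K)) (t : ℕ) :
    (standardMonomials I t).Finite :=
  (Finsupp.finite_of_degree_eq t).subset fun _ hβ => hβ.1

noncomputable def standardCoeffs (I : Ideal (MvPolynomial (Fin (m + 1)) K)) (t : ℕ) :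
    homogeneousSubmodule (Fin (m + 1)) K t →ₗ[K] (standardMonomials I t → K) :=
  LinearMap.pi fun β => lcoeff K β.1 ∘ₗ (homogeneousSubmodule (Fin (m + 1)) K t).subtype

theorem standardCoeffs_surjective (I : Ideal (MvPolynomial (Fin (m + 1)) K)) (t : ℕ) :
    Function.Surjective (standardCoeffs I t) := by
  classical
  have := (standardMonomials_finite I t).fintype
  intro l
  refine ⟨⟨∑ β, monomial β.1 (l β), Submodule.sum_mem _ fun β _ =>
    isHomogeneous_monomial _ β.2.1⟩, funext fun β => ?_⟩
  simp [standardCoeffs, coeff_monomial, Subtype.val_inj]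

theorem IsMonomialIdeal.ker_standardCoeffs (hI : IsMonomialIdeal I) (t : ℕ) :
    LinearMap.ker (standardCoeffs I t) =
      (I.restrictScalars K).comap (homogeneousSubmodule (Fin (m + 1)) K t).subtype := by
  ext ⟨f, hf⟩
  rw [LinearMap.mem_ker, funext_iff]
  change (∀ β : standardMonomials I t, coeff β.1 f = 0) ↔ f ∈ I
  rw [hI.mem_iff]
  constructor
  · intro h d hd
    by_contra hdI
    have hdeg : d.degree = t := by
      rw [Finsupp.degree_eq_weight_one]
      exact hf (mem_support_iff.mp hd)
    exact mem_support_iff.mp hd (h ⟨d, hdeg, hdI⟩)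
  · rintro h ⟨β, -, hβI⟩
    by_contra hβ
    exact hβI (h β (mem_support_iff.mpr hβ))

theorem IsMonomialIdeal.hilbFun_eq_ncard (hI : IsMonomialIdeal I) (t : ℕ) :
    hilbFun I t = (standardMonomials I t).ncard := by
  have := (standardMonomials_finite I t).fintype
  rw [hilbFun, ← hI.ker_standardCoeffs t,
    ((standardCoeffs I t).quotKerEquivOfSurjective (standardCoeffs_surjective I t)).finrank_eq,
    Module.finrank_fintype_fun_eq_card, ← Nat.card_eq_fintype_card, Nat.card_coe_set_eq]

end standardMonomials

namespace IsStronglyStable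

variable {m : ℕ} {K : Type*} [Field K] {I : Ideal (MvPolynomial (Fin (m + 1)) K)}

theorem monomial_shift_zero_mem (hI : IsStronglyStable I) {g : Fin (m + 1) →₀ ℕ}
    (hg : monomial g (1 : K) ∈ I) (h0 : 0 < g 0) (j : Fin (m + 1)) :
    monomial (g - Finsupp.single 0 1 + Finsupp.single j 1) (1 : K) ∈ I := by
  induction j using Fin.induction with
  | zero => rwa [tsub_add_cancel_of_le (Finsupp.single_le_iff.mpr h0)]
  | succ i ih =>
    have := hI.2 _ ih i (by simp)
    rwa [upMove, add_tsub_cancel_right] at this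

/-- Move one factor `x_0` of `x^g` to a variable in which `g` falls short of `γ + e_0`; such a
variable exists because `g` has smaller degree. -/
theorem monomial_mem_of_le_add_single_zero (hI : IsStronglyStable I) {g γ : Fin (m + 1) →₀ ℕ}
    (hg : monomial g (1 : K) ∈ I) (hle : g ≤ γ + Finsupp.single 0 1)
    (hdeg : g.degree ≤ γ.degree) : monomial γ (1 : K) ∈ I := by
  obtain ⟨j, hj⟩ : ∃ j, g j < (γ + Finsupp.single 0 1 : Fin (m + 1) →₀ ℕ) j := by
    by_contra! h
    have := congrArg Finsupp.degree (hle.antisymm h)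
    simp only [map_add, Finsupp.degree_single] at this
    omega
  rcases Nat.eq_zero_or_pos (g 0) with h0 | h0
  · refine monomial_one_mem_of_le hg fun l => ?_
    have hl := hle l
    simp only [Finsupp.add_apply, Finsupp.single_apply] at hl
    split_ifs at hl <;> subst_vars <;> omega
  · refine monomial_one_mem_of_le (hI.monomial_shift_zero_mem hg h0 j) fun l => ?_
    have hl := hle l
    simp only [Finsupp.add_apply, Finsupp.tsub_apply, Finsupp.single_apply] at hl hj ⊢
    split_ifs at hl hj ⊢ <;> subst_vars <;> omega

theorem exists_degree_forall_monomial_mem_of_add_single_zero_mem (hI : IsStronglyStable I) :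
    ∃ D, ∀ γ : Fin (m + 1) →₀ ℕ, D ≤ γ.degree →
      monomial (γ + Finsupp.single 0 1) (1 : K) ∈ I → monomial γ (1 : K) ∈ I := by
  obtain ⟨D, hD⟩ := Finsupp.exists_degree_bound_le_mem {β | monomial β (1 : K) ∈ I}
  refine ⟨D, fun γ hγ hmem => ?_⟩
  obtain ⟨g, hg, hle, hgD⟩ := hD _ hmem
  exact hI.monomial_mem_of_le_add_single_zero hg hle (hgD.trans hγ)

end IsStronglyStable

theorem standardMonomials_succ_diff_eq_image {m : ℕ} {K : Type*} [Field K]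
    {I : Ideal (MvPolynomial (Fin (m + 1)) K)} {t : ℕ}
    (hreg : ∀ γ : Fin (m + 1) →₀ ℕ, γ.degree = t →
      monomial (γ + Finsupp.single 0 1) (1 : K) ∈ I → monomial γ (1 : K) ∈ I) :
    standardMonomials I (t + 1) \ {β | β 0 = 0} =
      (· + Finsupp.single 0 1) '' standardMonomials I t := by
  ext β
  constructor
  · rintro ⟨⟨hdeg, hβI⟩, hβ0⟩
    have hβ : β - Finsupp.single 0 1 + Finsupp.single 0 1 = β :=
      tsub_add_cancel_of_le (Finsupp.single_le_iff.mpr (Nat.pos_of_ne_zero hβ0))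
    refine ⟨β - Finsupp.single 0 1, ⟨?_, fun h => hβI (monomial_one_mem_of_le h tsub_le_self)⟩, hβ⟩
    have := congrArg Finsupp.degree hβ
    simp only [map_add, Finsupp.degree_single] at this
    omega
  · rintro ⟨γ, ⟨hdeg, hγI⟩, rfl⟩
    exact ⟨⟨by simp [hdeg], fun h => hγI (hreg γ hdeg h)⟩, by simp⟩

section mapDomainSucc

variable {n : ℕ} {M : Type*} [AddCommMonoid M]

@[simp]
theorem Finsupp.mapDomain_succ_apply_zero (β : Fin n →₀ M) : β.mapDomain Fin.succ 0 = 0 :=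
  Finsupp.mapDomain_of_notMem_range _ _ fun ⟨k, hk⟩ => Fin.succ_ne_zero k hk

@[simp]
theorem Finsupp.mapDomain_succ_apply_succ (β : Fin n →₀ M) (j : Fin n) :
    β.mapDomain Fin.succ j.succ = β j :=
  Finsupp.mapDomain_apply (Fin.succ_injective _) β j

end mapDomainSucc

noncomputable def hyperplaneSection {n : ℕ} {K : Type*} [Field K]
    (I : Ideal (MvPolynomial (Fin (n + 1 + 1)) K)) : Ideal (MvPolynomial (Fin (n + 1)) K) :=
  Ideal.comap
    (rename (Fin.succ : Fin (n + 1) → Fin (n + 1 + 1)) :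
      MvPolynomial (Fin (n + 1)) K →ₐ[K] MvPolynomial (Fin (n + 1 + 1)) K)
    (Ideal.span {(X 0 : MvPolynomial (Fin (n + 1 + 1)) K)} ⊔ I)

section hyperplaneSection

variable {n : ℕ} {K : Type*} [Field K] {I : Ideal (MvPolynomial (Fin (n + 1 + 1)) K)}

theorem mapDomain_succ_upMove (i : Fin n) (α : Fin (n + 1) →₀ ℕ) :
    (upMove i α).mapDomain Fin.succ = upMove i.succ (α.mapDomain Fin.succ) := by
  ext j
  cases j using Fin.cases <;>
    simp [upMove, Finsupp.single_apply, Fin.succ_ne_zero]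

theorem monomial_mem_hyperplaneSection_iff (hI : IsMonomialIdeal I)
    (β : Fin (n + 1) →₀ ℕ) :
    monomial β (1 : K) ∈ hyperplaneSection I ↔ monomial (β.mapDomain Fin.succ) (1 : K) ∈ I := by
  rw [hyperplaneSection, Ideal.mem_comap, rename_monomial]
  exact ⟨hI.monomial_mem_of_mem_span_X_sup (Finsupp.mapDomain_succ_apply_zero β),
    Ideal.mem_sup_right⟩

theorem IsMonomialIdeal.hyperplaneSection (hI : IsMonomialIdeal I) :
    IsMonomialIdeal (hyperplaneSection I) := by
  intro f hf d hd
  rw [_root_.hyperplaneSection, Ideal.mem_comap] at hf ⊢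
  rw [rename_monomial]
  refine hI.span_X_sup 0 _ hf _ ?_
  rw [support_rename_of_injective (Fin.succ_injective _)]
  exact Finset.mem_image_of_mem _ hd

theorem IsStronglyStable.hyperplaneSection (hI : IsStronglyStable I) :
    IsStronglyStable (hyperplaneSection I) := by
  refine ⟨hI.1.hyperplaneSection, fun α hα i hi => ?_⟩
  rw [monomial_mem_hyperplaneSection_iff hI.1] at hα ⊢
  rw [mapDomain_succ_upMove]
  exact hI.2 _ hα i.succ (by rwa [← Fin.succ_castSucc, Finsupp.mapDomain_succ_apply_succ])

theorem standardMonomials_inter_eq_image (hI : IsMonomialIdeal I) (t : ℕ) :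
    standardMonomials I t ∩ {β | β 0 = 0} =
      (Finsupp.mapDomain Fin.succ) '' standardMonomials (hyperplaneSection I) t := by
  ext β
  constructor
  · rintro ⟨⟨hdeg, hβI⟩, hβ0 : β 0 = 0⟩
    have hβ : β.tail.mapDomain Fin.succ = β := by
      ext j
      cases j using Fin.cases <;> simp [hβ0.symm, Finsupp.tail_apply]
    refine ⟨β.tail, ⟨?_, ?_⟩, hβ⟩
    · rwa [← hβ, Finsupp.degree_mapDomain] at hdeg
    · rwa [monomial_mem_hyperplaneSection_iff hI, hβ]
  · rintro ⟨β, ⟨hdeg, hβI⟩, rfl⟩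
    refine ⟨⟨by simpa using hdeg, ?_⟩, Finsupp.mapDomain_succ_apply_zero β⟩
    rwa [← monomial_mem_hyperplaneSection_iff hI]

theorem hilbFun_succ_eq_add_hilbFun_hyperplaneSection (hI : IsMonomialIdeal I) {t : ℕ}
    (hreg : ∀ γ : Fin (n + 1 + 1) →₀ ℕ, γ.degree = t →
      monomial (γ + Finsupp.single 0 1) (1 : K) ∈ I → monomial γ (1 : K) ∈ I) :
    hilbFun I (t + 1) = hilbFun I t + hilbFun (hyperplaneSection I) (t + 1) := by
  rw [hI.hilbFun_eq_ncard, hI.hilbFun_eq_ncard, hI.hyperplaneSection.hilbFun_eq_ncard,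
    ← Set.ncard_inter_add_ncard_sdiff_eq_ncard _ {β | β 0 = 0} (standardMonomials_finite I _),
    standardMonomials_inter_eq_image hI, standardMonomials_succ_diff_eq_image hreg,
    Set.ncard_image_of_injective _ (Finsupp.mapDomain_injective (Fin.succ_injective _)),
    Set.ncard_image_of_injective _ (add_left_injective _), add_comm]

end hyperplaneSection

/-- If `I ⊂ K[x_0,…,x_{n+1}]` is strongly stable with Hilbert polynomial `p(t)`, then
`I' = (x_0, I) ∩ K[x_1,…,x_{n+1}]` is a strongly stable ideal of `K[x_1,…,x_{n+1}]`
whose quotient has Hilbert polynomial `Δp(t) = p(t) − p(t−1)`. Here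
`K[x_1,…,x_{n+1}]` is embedded in `K[x_0,…,x_{n+1}]` via `x_i ↦ x_{i+1}`. -/
theorem section_stronglyStable_hilbertPolynomial {n : ℕ} {K : Type*} [Field K]
    (I : Ideal (MvPolynomial (Fin (n + 1 + 1)) K)) (hI : IsStronglyStable I)
    (p : Polynomial ℚ)
    (hp : ∃ N : ℕ, ∀ t : ℕ, N ≤ t → (hilbFun I t : ℚ) = p.eval (t : ℚ))
    (I' : Ideal (MvPolynomial (Fin (n + 1)) K))
    (hI' : I' = Ideal.comap
      (rename (Fin.succ : Fin (n + 1) → Fin (n + 1 + 1)) :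
        MvPolynomial (Fin (n + 1)) K →ₐ[K] MvPolynomial (Fin (n + 1 + 1)) K)
      (Ideal.span {(X 0 : MvPolynomial (Fin (n + 1 + 1)) K)} ⊔ I)) :
    IsStronglyStable I' ∧
      ∃ N : ℕ, ∀ t : ℕ, N ≤ t →
        (hilbFun I' t : ℚ) = p.eval (t : ℚ) - p.eval ((t : ℚ) - 1) := by
  obtain rfl : I' = hyperplaneSection I := hI'
  obtain ⟨N, hN⟩ := hp
  obtain ⟨D, hD⟩ := hI.exists_degree_forall_monomial_mem_of_add_single_zero_mem
  refine ⟨hI.hyperplaneSection, N + D + 1, fun t ht => ?_⟩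
  obtain ⟨s, rfl⟩ : ∃ s, t = s + 1 := ⟨t - 1, by omega⟩
  have hsucc := congrArg (Nat.cast : ℕ → ℚ)
    (hilbFun_succ_eq_add_hilbFun_hyperplaneSection (t := s) hI.1 fun γ hγ => hD γ (by omega))
  push_cast [hN s (by omega), hN (s + 1) (by omega), add_sub_cancel_right] at hsucc ⊢
  linarith
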